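/- arXiv:1602.03394 — 3 statements merged into one kernel-verified Lean document; each statement's English description precedes it below -/
import Mathlib

section
/- Let G be a finite metric graph and let λ > 0. Assume that the subgraph G_λ is connected and contains at least one cycle whose length is an odd integer multiple of π/√λ. Then dim R(G, λ) = β₁(G_λ) − 1. -/
open Real Set Filter Topology

noncomputable section

/-- A finite metric graph: finite vertex and edge sets, each edge `e` has an initial
vertex `o e`, a terminal vertex `t e` and a positive length `L e`, and is identified
with the interval `[0, L e]`.  Every vertex is an endpoint of some edge. -/
structure MetricGraph where
  V : Type
  E : Type
  [fintV : Fintype V]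
  [fintE : Fintype E]
  [decV : DecidableEq V]
  [decE : DecidableEq E]
  o : E → V
  t : E → V
  L : E → ℝ
  L_pos : ∀ e, 0 < L e
  noIsolated : ∀ v, ∃ e, o e = v ∨ t e = v

attribute [instance] MetricGraph.fintV MetricGraph.fintE MetricGraph.decV MetricGraph.decE

namespace MetricGraph

variable (G : MetricGraph)

/-- The source vertex of edge `e` traversed in direction `d`. -/
def esrc (e : G.E) (d : Bool) : G.V := if d then G.o e else G.t e

/-- The destination vertex of edge `e` traversed in direction `d`. -/
def edst (e : G.E) (d : Bool) : G.V := if d then G.t e else G.o e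

/-- A cycle in a metric graph: a closed walk which uses no edge twice and repeats no
vertex except that its initial and terminal vertices coincide. -/
structure Cycle where
  n : ℕ
  npos : 0 < n
  edge : Fin n → G.E
  dir : Fin n → Bool
  edge_inj : Function.Injective edge
  vert_inj : Function.Injective fun i => G.esrc (edge i) (dir i)
  chain : ∀ i : Fin n,
    G.edst (edge i) (dir i) =
      G.esrc (edge ⟨((i : ℕ) + 1) % n, Nat.mod_lt _ npos⟩)
        (dir ⟨((i : ℕ) + 1) % n, Nat.mod_lt _ npos⟩)

/-- The length of a cycle: the sum of the lengths of its edges. -/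
def Cycle.length {G : MetricGraph} (c : G.Cycle) : ℝ := ∑ i, G.L (c.edge i)

/-- The cycle `c` lies in the subgraph given by the edge set `S`. -/
def Cycle.inSub {G : MetricGraph} (c : G.Cycle) (S : Set G.E) : Prop := ∀ i, c.edge i ∈ S

/-- The cycle `c` has odd length with respect to `x`: its length is an odd multiple of `x`. -/
def Cycle.oddLength {G : MetricGraph} (c : G.Cycle) (x : ℝ) : Prop :=
  ∃ m : ℕ, Odd m ∧ c.length = m * x

/-- The initial vertex of a cycle. -/
def Cycle.start {G : MetricGraph} (c : G.Cycle) : G.V :=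
  G.esrc (c.edge ⟨0, c.npos⟩) (c.dir ⟨0, c.npos⟩)

/-- The vertices incident to an edge of the edge set `S`, i.e. the vertex set of the
subgraph generated by `S`. -/
def incVerts (S : Set G.E) : Set G.V := {v | ∃ e ∈ S, G.o e = v ∨ G.t e = v}

/-- Two vertices are related iff they are connected through edges of `S`. -/
def connRel (S : Set G.E) : G.V → G.V → Prop :=
  Relation.EqvGen fun v w => ∃ e ∈ S, G.o e = v ∧ G.t e = w

/-- The connected component of the vertex `v` in the subgraph given by `S`. -/
def component (S : Set G.E) (v : G.V) : Set G.V := {w | G.connRel S v w}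

/-- The number of connected components of the subgraph given by the edge set `S`. -/
def beta0 (S : Set G.E) : ℕ := (G.component S '' G.incVerts S).ncard

/-- The first Betti number `|E| - |V| + β₀` of the subgraph given by the edge set `S`. -/
def beta1 (S : Set G.E) : ℤ :=
  (S.ncard : ℤ) - ((G.incVerts S).ncard : ℤ) + (G.beta0 S : ℤ)

/-- The number of connected components of the subgraph given by `S` which contain a
cycle of odd length with respect to `x`. -/
def beta0odd (S : Set G.E) (x : ℝ) : ℕ :=
  (G.component S '' {v | v ∈ G.incVerts S ∧
    ∃ c : G.Cycle, c.inSub S ∧ c.oddLength x ∧ G.connRel S v c.start}).ncard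

/-- The edge set of the subgraph `G_λ`: all edges whose length is a positive integer
multiple of `π / √λ`. -/
def lamEdges (lam : ℝ) : Set G.E :=
  {e | ∃ k : ℕ, 0 < k ∧ G.L e = k * (π / Real.sqrt lam)}

/-- An edgewise given function is continuous at all the vertices of `G`. -/
def ContVert (f : G.E → ℝ → ℂ) : Prop :=
  (∀ e₁ e₂, G.o e₁ = G.o e₂ → f e₁ 0 = f e₂ 0) ∧
  (∀ e₁ e₂, G.o e₁ = G.t e₂ → f e₁ 0 = f e₂ (G.L e₂)) ∧
  (∀ e₁ e₂, G.t e₁ = G.t e₂ → f e₁ (G.L e₁) = f e₂ (G.L e₂))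

/-- The value of an (edgewise given, vertex-continuous) function at the vertex `v`. -/
def vtxVal (f : G.E → ℝ → ℂ) (v : G.V) : ℂ :=
  if h : ∃ e, G.o e = v then f h.choose 0
  else f (G.noIsolated v).choose (G.L ((G.noIsolated v).choose))

/-- `∂_ν f (v)`: the sum of the derivatives at the vertex `v` of the restrictions of
`f` to the edges incident to `v`, all pointing towards `v`. -/
def normDer (f : G.E → ℝ → ℂ) (v : G.V) : ℂ :=
  (∑ e ∈ Finset.univ.filter fun e => G.t e = v, deriv (f e) (G.L e)) -
    ∑ e ∈ Finset.univ.filter fun e => G.o e = v, deriv (f e) 0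

/-- `f` solves `-f'' = μ f` on every edge and is continuous at the vertices.
(A solution of `-f'' = μ f` on `[0, L e]` is identified with its unique extension to a
global solution on `ℝ`.) -/
def IsSol (mu : ℂ) (f : G.E → ℝ → ℂ) : Prop :=
  (∀ e, ContDiff ℝ 2 (f e)) ∧
  (∀ e, ∀ x : ℝ, deriv (deriv (f e)) x = -mu * f e x) ∧ G.ContVert f

/-- Membership in `ker (-Δ_G - λ)` for the Kirchhoff Laplacian `-Δ_G`. -/
def InKer (lam : ℝ) (f : G.E → ℝ → ℂ) : Prop :=
  G.IsSol (lam : ℂ) f ∧ ∀ v, G.normDer f v = 0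

/-- `ker (-Δ_G - λ)` as a set of (edgewise given) functions. -/
def kerSet (lam : ℝ) : Set (G.E → ℝ → ℂ) := {f | G.InKer lam f}

/-- `λ` is an eigenvalue of the Kirchhoff Laplacian `-Δ_G`. -/
def IsEigenvalue (lam : ℝ) : Prop := G.kerSet lam ≠ {0}

/-- `dim ker (-Δ_G - λ)`. -/
def dimKer (lam : ℝ) : ℕ := Module.finrank ℂ (Submodule.span ℂ (G.kerSet lam))

/-- The resonance eigenspace `R (G, λ)`: all elements of `ker (-Δ_G - λ)` vanishing at
every vertex of `G`. -/
def resSet (lam : ℝ) : Set (G.E → ℝ → ℂ) :=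
  {f | G.InKer lam f ∧ ∀ e, f e 0 = 0 ∧ f e (G.L e) = 0}

/-- `λ` is a (real) resonance of `G` iff `R (G, λ) ≠ {0}`. -/
def IsResonance (lam : ℝ) : Prop := G.resSet lam ≠ {0}

/-- `dim R (G, λ)`. -/
def dimRes (lam : ℝ) : ℕ := Module.finrank ℂ (Submodule.span ℂ (G.resSet lam))

/-- `R_B (G, λ)`: all elements of `ker (-Δ_G - λ)` vanishing at every vertex in `B`. -/
def resSetB (B : Set G.V) (lam : ℝ) : Set (G.E → ℝ → ℂ) :=
  {f | G.InKer lam f ∧ ∀ e, (G.o e ∈ B → f e 0 = 0) ∧ (G.t e ∈ B → f e (G.L e) = 0)}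

/-- `dim R_B (G, λ)`. -/
def dimResB (B : Set G.V) (lam : ℝ) : ℕ :=
  Module.finrank ℂ (Submodule.span ℂ (G.resSetB B lam))

/-- The degree of a vertex (a loop counts twice). -/
def degree (v : G.V) : ℕ := {e | G.o e = v}.ncard + {e | G.t e = v}.ncard

/-- The degree of a vertex inside the subgraph given by the edge set `S`. -/
def degreeIn (S : Set G.E) (v : G.V) : ℕ :=
  {e | e ∈ S ∧ G.o e = v}.ncard + {e | e ∈ S ∧ G.t e = v}.ncard

/-- The edge set of the core of `G`: the largest subgraph without vertices of degree one. -/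
def coreEdges : Set G.E := ⋃₀ {S : Set G.E | ∀ v, G.degreeIn S v ≠ 1}

/-- A boundary vertex is a vertex of degree one. -/
def IsBoundaryVertex (v : G.V) : Prop := G.degree v = 1

/-- A proper core vertex: all edges attached to it belong to the core of `G`. -/
def IsProperCoreVertex (v : G.V) : Prop :=
  ∀ e, G.o e = v ∨ G.t e = v → e ∈ G.coreEdges

/-- The defining property of the function `f^{(l)}` for the Titchmarsh--Weyl matrix:
`f` solves `-f'' = μ f` edgewise, is continuous at the vertices, and satisfies
`∂_ν f (v₀) = 1` and `∂_ν f (v) = 0` for all vertices `v ≠ v₀`. -/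
def IsTWsol (mu : ℂ) (v0 : G.V) (f : G.E → ℝ → ℂ) : Prop :=
  G.IsSol mu f ∧ G.normDer f v0 = 1 ∧ ∀ v, v ≠ v0 → G.normDer f v = 0

open scoped Classical in
/-- The Titchmarsh--Weyl matrix `M_B (μ)` with entries `(M_B (μ))_{k,l} = f^{(l)} (v_k)`
(defined via choice; junk if no `f^{(l)}` exists, i.e. at the eigenvalues). -/
def TW (B : Finset G.V) (mu : ℂ) : Matrix B B ℂ :=
  Matrix.of fun k l : B => if h : ∃ f, G.IsTWsol mu l f then G.vtxVal h.choose k else 0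

/-- The cycle `c` has commensurate edges: all ratios of edge lengths are rational. -/
def Commensurate (c : G.Cycle) : Prop :=
  ∀ i j, ∃ q : ℚ, G.L (c.edge i) = q * G.L (c.edge j)

/-- `u_C`: the maximal number such that the length of each edge of the cycle `c` is a
positive integer multiple of it. -/
def uC (c : G.Cycle) : ℝ :=
  sSup {u : ℝ | 0 < u ∧ ∀ i, ∃ k : ℕ, 0 < k ∧ G.L (c.edge i) = k * u}

/-- `λ_G := inf { π²/u_C² : C a cycle in G with commensurate edges }`, with value `+∞`
if there is no cycle with commensurate edges. -/
def lamThreshold : EReal :=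
  sInf {x : EReal | ∃ c : G.Cycle, G.Commensurate c ∧ x = ((π ^ 2 / (G.uC c) ^ 2 : ℝ) : EReal)}

end MetricGraph

section MatrixFun

variable {m : Type} [Fintype m]

/-- The matrix function `M` has a pole of order `n` at `λ`:
`lim_{z → λ} (z - λ)^n M(z)` exists and is nonzero, while
`lim_{z → λ} (z - λ)^(n+1) M(z) = 0`. -/
def hasPoleOrder (M : ℂ → Matrix m m ℂ) (lam : ℂ) (n : ℕ) : Prop :=
  (∃ A : Matrix m m ℂ, A ≠ 0 ∧
    Filter.Tendsto (fun z => (z - lam) ^ n • M z) (𝓝[≠] lam) (𝓝 A)) ∧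
  Filter.Tendsto (fun z => (z - lam) ^ (n + 1) • M z) (𝓝[≠] lam) (𝓝 0)

/-- `λ` is a pole of the matrix function `M`: `M` is analytic on a punctured
neighborhood of `λ` and has a pole of some order `n ≥ 1` at `λ`. -/
def isPole (M : ℂ → Matrix m m ℂ) (lam : ℂ) : Prop :=
  (∀ᶠ z in 𝓝[≠] lam, ∀ k l, AnalyticAt ℂ (fun w => M w k l) z) ∧
  ∃ n : ℕ, 1 ≤ n ∧ hasPoleOrder M lam n

open scoped Classical in
/-- `Res_λ M := (2πi)⁻¹ ∮_Γ M(μ) dμ`, computed entrywise over a sufficiently small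
positively oriented circle `Γ` centered at `λ` (defined via choice as the common value
of the circle integrals over all sufficiently small radii). -/
def matResidue (M : ℂ → Matrix m m ℂ) (lam : ℂ) : Matrix m m ℂ :=
  Matrix.of fun k l =>
    if h : ∃ c : ℂ, ∀ᶠ R in 𝓝[>] (0 : ℝ),
        (2 * (π : ℂ) * Complex.I)⁻¹ * circleIntegral (fun z => M z k l) lam R = c
    then h.choose else 0

end MatrixFun

/-!
An eigenfunction vanishing at both ends of an edge is `a sin (√λ x)` there, which forces `a = 0`
unless the edge lies in `G_λ`. So `R(G, λ)` is parametrized by coefficient vectors `a` on the edges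
of `G_λ`, and the Kirchhoff conditions say that `a` lies in the kernel of the signed incidence
matrix `A` of `G_λ`, whose entries are `cos (√λ L e) = ±1` at the terminal and `-1` at the initial
vertex of `e`. A vector `b` in the kernel of `Aᵀ` satisfies `b (o e) = ±b (t e)` along every edge;
going around a cycle of odd length multiplies by `-1`, so `b` vanishes at a vertex of that cycle
and, by connectedness, everywhere. Hence `rank A = |V(G_λ)|` and
`dim R(G, λ) = |E(G_λ)| - |V(G_λ)| = β₁(G_λ) - 1`.
-/

open scoped Matrix

lemma hasDerivAt_ofReal_sin_mul (s x : ℝ) :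
    HasDerivAt (fun y : ℝ => (Real.sin (s * y) : ℂ)) (s * Real.cos (s * x)) x := by
  have := ((Real.hasDerivAt_sin (s * x)).comp x ((hasDerivAt_id x).const_mul s)).ofReal_comp
  simpa [mul_comm] using this

lemma hasDerivAt_ofReal_cos_mul (s x : ℝ) :
    HasDerivAt (fun y : ℝ => (Real.cos (s * y) : ℂ)) (-(s * Real.sin (s * x))) x := by
  have := ((Real.hasDerivAt_cos (s * x)).comp x ((hasDerivAt_id x).const_mul s)).ofReal_comp
  simpa [mul_comm] using this

lemma deriv_ofReal_sin_mul (s : ℝ) :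
    deriv (fun y : ℝ => (Real.sin (s * y) : ℂ)) = fun x => (s : ℂ) * Real.cos (s * x) :=
  funext fun x => (hasDerivAt_ofReal_sin_mul s x).deriv

lemma deriv_ofReal_cos_mul (s : ℝ) :
    deriv (fun y : ℝ => (Real.cos (s * y) : ℂ)) = fun x => -((s : ℂ) * Real.sin (s * x)) :=
  funext fun x => (hasDerivAt_ofReal_cos_mul s x).deriv

lemma contDiff_ofReal_sin_mul (s : ℝ) : ContDiff ℝ 2 fun y : ℝ => (Real.sin (s * y) : ℂ) :=
  Complex.ofRealCLM.contDiff.comp (Real.contDiff_sin.comp (contDiff_const.mul contDiff_id))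

lemma contDiff_ofReal_cos_mul (s : ℝ) : ContDiff ℝ 2 fun y : ℝ => (Real.cos (s * y) : ℂ) :=
  Complex.ofRealCLM.contDiff.comp (Real.contDiff_cos.comp (contDiff_const.mul contDiff_id))

lemma deriv_deriv_ofReal_sin_mul (s x : ℝ) :
    deriv (deriv fun y : ℝ => (Real.sin (s * y) : ℂ)) x = -(s : ℂ) ^ 2 * Real.sin (s * x) := by
  rw [deriv_ofReal_sin_mul, ((hasDerivAt_ofReal_cos_mul s x).const_mul (s : ℂ)).deriv]
  ring

lemma deriv_deriv_ofReal_cos_mul (s x : ℝ) :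
    deriv (deriv fun y : ℝ => (Real.cos (s * y) : ℂ)) x = -(s : ℂ) ^ 2 * Real.cos (s * x) := by
  rw [deriv_ofReal_cos_mul, ((hasDerivAt_ofReal_sin_mul s x).const_mul (s : ℂ)).fun_neg.deriv]
  ring

lemma wronskian_eq_of_deriv_deriv {μ : ℂ} {f g : ℝ → ℂ} (hf : ContDiff ℝ 2 f)
    (hg : ContDiff ℝ 2 g) (hf'' : ∀ x, deriv (deriv f) x = -μ * f x)
    (hg'' : ∀ x, deriv (deriv g) x = -μ * g x) (x : ℝ) :
    deriv f x * g x - f x * deriv g x = deriv f 0 * g 0 - f 0 * deriv g 0 := by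
  have hW : ∀ y, HasDerivAt (fun y => deriv f y * g y - f y * deriv g y) 0 y := fun y => by
    have := ((hf.differentiable_deriv_two y).hasDerivAt.mul
      ((hg.differentiable two_ne_zero) y).hasDerivAt).sub
      (((hf.differentiable two_ne_zero) y).hasDerivAt.mul
        (hg.differentiable_deriv_two y).hasDerivAt)
    refine this.congr_deriv ?_
    rw [hf'', hg'']
    ring
  exact is_const_of_deriv_eq_zero (fun y => (hW y).differentiableAt) (fun y => (hW y).deriv) x 0

lemma eq_mul_sin_of_deriv_deriv {s : ℝ} (hs : s ≠ 0) {f : ℝ → ℂ} (hf : ContDiff ℝ 2 f)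
    (hf'' : ∀ x, deriv (deriv f) x = -(s : ℂ) ^ 2 * f x) (hf0 : f 0 = 0) (x : ℝ) :
    f x = deriv f 0 / s * Real.sin (s * x) := by
  have hsin := wronskian_eq_of_deriv_deriv hf (contDiff_ofReal_sin_mul s) hf''
    (deriv_deriv_ofReal_sin_mul s) x
  have hcos := wronskian_eq_of_deriv_deriv hf (contDiff_ofReal_cos_mul s) hf''
    (deriv_deriv_ofReal_cos_mul s) x
  have hpyth : (Real.sin (s * x) : ℂ) ^ 2 + (Real.cos (s * x) : ℂ) ^ 2 = 1 := by
    exact_mod_cast Real.sin_sq_add_cos_sq (s * x)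
  simp only [deriv_ofReal_sin_mul, deriv_ofReal_cos_mul, hf0, mul_zero, Real.sin_zero,
    Real.cos_zero, Complex.ofReal_zero, Complex.ofReal_one, zero_mul, sub_zero, mul_one]
    at hsin hcos
  rw [div_mul_eq_mul_div, eq_div_iff (by exact_mod_cast hs)]
  linear_combination
    (Real.sin (s * x) : ℂ) * hcos - (Real.cos (s * x) : ℂ) * hsin - (s * f x) * hpyth

lemma Finset.prod_range_mul_eq_of_eq_mul {M : Type*} [CommMonoid M] {u s : ℕ → M}
    (h : ∀ j, u j = s j * u (j + 1)) (j : ℕ) : u 0 = (∏ i ∈ Finset.range j, s i) * u j := by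
  induction j with
  | zero => simp
  | succ j ih => rw [ih, h j, Finset.prod_range_succ, mul_assoc]

theorem Matrix.finrank_ker_mulVecLin_add_card {K m n : Type*} [Field K] [Fintype m] [Fintype n]
    (A : Matrix m n K) (hA : Function.Injective Aᵀ.mulVecLin) :
    Module.finrank K (LinearMap.ker A.mulVecLin) + Fintype.card m = Fintype.card n := by
  have hrank : A.rank = Fintype.card m := by
    rw [← A.rank_transpose, Matrix.rank, LinearMap.finrank_range_of_inj hA, Module.finrank_pi]
  rw [← hrank, Matrix.rank, add_comm, LinearMap.finrank_range_add_finrank_ker, Module.finrank_pi]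

namespace MetricGraph

open scoped Classical

variable {G : MetricGraph} {S : Set G.E} {σ : G.E → ℂ}

lemma o_mem_incVerts {e : G.E} (he : e ∈ S) : G.o e ∈ G.incVerts S := ⟨e, he, Or.inl rfl⟩

lemma t_mem_incVerts {e : G.E} (he : e ∈ S) : G.t e ∈ G.incVerts S := ⟨e, he, Or.inr rfl⟩

lemma apply_eq_zero_iff_of_connRel {b : G.V → ℂ} (hb : ∀ e ∈ S, b (G.o e) = σ e * b (G.t e))
    (hσ : ∀ e ∈ S, σ e ≠ 0) {v w : G.V} (hvw : G.connRel S v w) : b v = 0 ↔ b w = 0 := by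
  induction hvw with
  | rel x y hxy =>
    obtain ⟨e, he, rfl, rfl⟩ := hxy
    rw [hb e he, mul_eq_zero, or_iff_right (hσ e he)]
  | refl => rfl
  | symm _ _ _ ih => exact ih.symm
  | trans _ _ _ _ _ ih₁ ih₂ => exact ih₁.trans ih₂

lemma Cycle.apply_start_eq_prod_mul (c : G.Cycle) (hc : c.inSub S) {b : G.V → ℂ}
    (hb : ∀ e ∈ S, b (G.o e) = σ e * b (G.t e)) (hσ : ∀ e ∈ S, σ e ^ 2 = 1) :
    b c.start = (∏ i, σ (c.edge i)) * b c.start := by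
  have hstep : ∀ i, b (G.esrc (c.edge i) (c.dir i))
      = σ (c.edge i) * b (G.edst (c.edge i) (c.dir i)) := fun i => by
    cases c.dir i
    · rw [esrc, edst, if_neg Bool.false_ne_true, if_neg Bool.false_ne_true, hb _ (hc i),
        ← mul_assoc, ← sq, hσ _ (hc i), one_mul]
    · exact hb _ (hc i)
  let idx : ℕ → Fin c.n := fun j => ⟨j % c.n, Nat.mod_lt _ c.npos⟩
  have hround := Finset.prod_range_mul_eq_of_eq_mul
    (u := fun j => b (G.esrc (c.edge (idx j)) (c.dir (idx j))))
    (s := fun j => σ (c.edge (idx j))) (fun j => by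
      have hnext : idx (j + 1) = ⟨((idx j : ℕ) + 1) % c.n, Nat.mod_lt _ c.npos⟩ :=
        Fin.ext (Nat.mod_add_mod j c.n 1).symm
      rw [hstep, c.chain, hnext]) c.n
  have hidx_lt : ∀ i : Fin c.n, idx i = i := fun i => Fin.ext (Nat.mod_eq_of_lt i.isLt)
  have hidx_n : idx c.n = idx 0 := Fin.ext (by simp [idx])
  simp only [hidx_n, ← Fin.prod_univ_eq_prod_range, hidx_lt] at hround
  exact hround

lemma beta0_eq_one (hconn : ∀ v ∈ G.incVerts S, ∀ w ∈ G.incVerts S, G.connRel S v w)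
    (hne : (G.incVerts S).Nonempty) : G.beta0 S = 1 := by
  obtain ⟨v₀, hv₀⟩ := hne
  rw [beta0, Set.ncard_eq_one]
  refine ⟨G.component S v₀, Set.eq_singleton_iff_unique_mem.mpr ⟨⟨v₀, hv₀, rfl⟩, ?_⟩⟩
  rintro _ ⟨w, hw, rfl⟩
  ext u
  exact ⟨(Relation.EqvGen.trans _ _ _ (hconn v₀ hv₀ w hw) ·),
    (Relation.EqvGen.trans _ _ _ (hconn w hw v₀ hv₀) ·)⟩

variable (G S σ) in
def signedIncidence : Matrix (G.incVerts S) S ℂ :=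
  Matrix.of fun v e => (if G.t e = v then σ e else 0) - (if G.o e = v then 1 else 0)

lemma transpose_signedIncidence_mulVec_apply (b : G.incVerts S → ℂ) (e : S) :
    ((G.signedIncidence S σ)ᵀ *ᵥ b) e
      = σ e * b ⟨G.t e, t_mem_incVerts e.2⟩ - b ⟨G.o e, o_mem_incVerts e.2⟩ := by
  have hsum : ∀ (u : G.V) (hu : u ∈ G.incVerts S) (x : ℂ),
      ∑ v : G.incVerts S, (if u = v then x else 0) * b v = x * b ⟨u, hu⟩ := fun u hu x => by
    rw [Fintype.sum_eq_single ⟨u, hu⟩ fun v hv => by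
      rw [if_neg fun h => hv (Subtype.ext h.symm), zero_mul], if_pos rfl]
  simp only [Matrix.mulVec, dotProduct, Matrix.transpose_apply, signedIncidence, Matrix.of_apply,
    sub_mul, Finset.sum_sub_distrib, hsum _ (t_mem_incVerts e.2), hsum _ (o_mem_incVerts e.2),
    one_mul]

theorem injective_transpose_signedIncidence
    (hconn : ∀ v ∈ G.incVerts S, ∀ w ∈ G.incVerts S, G.connRel S v w)
    (hσ : ∀ e ∈ S, σ e ^ 2 = 1) (c : G.Cycle) (hc : c.inSub S) (hcσ : ∏ i, σ (c.edge i) = -1) :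
    Function.Injective (G.signedIncidence S σ)ᵀ.mulVecLin := by
  rw [← LinearMap.ker_eq_bot, LinearMap.ker_eq_bot']
  intro b hb
  let b' : G.V → ℂ := fun v => if h : v ∈ G.incVerts S then b ⟨v, h⟩ else 0
  have hb' : ∀ e ∈ S, b' (G.o e) = σ e * b' (G.t e) := fun e he => by
    have := congrFun hb ⟨e, he⟩
    rw [Matrix.mulVecLin_apply, transpose_signedIncidence_mulVec_apply, Pi.zero_apply] at this
    simp only [b', dif_pos (o_mem_incVerts he), dif_pos (t_mem_incVerts he)]
    linear_combination -this
  have hσ0 : ∀ e ∈ S, σ e ≠ 0 := fun e he h0 => by simpa [h0] using hσ e he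
  have hstart_mem : c.start ∈ G.incVerts S := by
    unfold Cycle.start esrc
    split
    exacts [o_mem_incVerts (hc _), t_mem_incVerts (hc _)]
  have hstart : b' c.start = 0 := by
    have := c.apply_start_eq_prod_mul hc hb' hσ
    rw [hcσ] at this
    linear_combination this / 2
  funext v
  have := (apply_eq_zero_iff_of_connRel hb' hσ0 (hconn _ hstart_mem _ v.2)).mp hstart
  simpa [b'] using this

lemma finrank_ker_signedIncidence_add_ncard
    (hinj : Function.Injective (G.signedIncidence S σ)ᵀ.mulVecLin) :
    Module.finrank ℂ (LinearMap.ker (G.signedIncidence S σ).mulVecLin) + (G.incVerts S).ncard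
      = S.ncard := by
  simpa only [← Nat.card_eq_fintype_card, Nat.card_coe_set_eq] using
    Matrix.finrank_ker_mulVecLin_add_card _ hinj

variable (G) in
def edgeCos (s : ℝ) (e : G.E) : ℂ := Real.cos (s * G.L e)

variable (S) in
def sinWave (s : ℝ) : (S → ℂ) →ₗ[ℂ] G.E → ℝ → ℂ :=
  (LinearMap.pi fun e => LinearMap.pi fun x => (Real.sin (s * x) : ℂ) • LinearMap.proj e) ∘ₗ
    Function.ExtendByZero.linearMap ℂ Subtype.val

lemma sinWave_apply (s : ℝ) (a : S → ℂ) (e : G.E) :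
    G.sinWave S s a e = fun x => Function.extend Subtype.val a 0 e * Real.sin (s * x) :=
  funext fun _ => mul_comm _ _

lemma sinWave_injective {s : ℝ} (hs : s ≠ 0) : Function.Injective (G.sinWave S s) := by
  intro a b hab
  funext e
  have := congrFun (congrFun hab e) (π / 2 / s)
  simpa [sinWave_apply, mul_div_cancel₀ _ hs, Function.extend_val_apply e.2] using this

lemma deriv_sinWave (s : ℝ) (a : S → ℂ) (e : G.E) (x : ℝ) :
    deriv (G.sinWave S s a e) x
      = Function.extend Subtype.val a 0 e * (s * Real.cos (s * x)) := by
  rw [sinWave_apply]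
  exact ((hasDerivAt_ofReal_sin_mul s x).const_mul _).deriv

lemma sum_extend_val_mul (a : S → ℂ) (g : G.E → ℂ) :
    ∑ e, Function.extend Subtype.val a 0 e * g e = ∑ e : S, a e * g e := by
  have hS : ∀ e : {e // e ∈ S}, Function.extend Subtype.val a 0 e * g e = a e * g e :=
    fun e => by rw [Function.extend_val_apply e.2]
  have hSc : ∀ e : {e // e ∉ S}, Function.extend Subtype.val a 0 e * g e = 0 :=
    fun e => by rw [Function.extend_val_apply' e.2, Pi.zero_apply, zero_mul]
  rw [← Fintype.sum_subtype_add_sum_subtype (· ∈ S)]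
  simp only [hS, hSc, Finset.sum_const_zero, add_zero]

lemma normDer_sinWave (s : ℝ) (a : S → ℂ) (v : G.V) :
    G.normDer (G.sinWave S s a) v
      = s * Function.extend Subtype.val (G.signedIncidence S (G.edgeCos s) *ᵥ a) 0 v := by
  calc G.normDer (G.sinWave S s a) v
      = ∑ e, Function.extend Subtype.val a 0 e *
          (s * ((if G.t e = v then G.edgeCos s e else 0) - if G.o e = v then 1 else 0)) := by
        simp only [normDer, deriv_sinWave, Finset.sum_filter, ← Finset.sum_sub_distrib]
        refine Fintype.sum_congr _ _ fun e => ?_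
        split_ifs <;> simp only [edgeCos, Real.cos_zero, Complex.ofReal_one, mul_zero, sub_zero,
          zero_sub] <;> ring
    _ = s * ∑ e : S, ((if G.t e = v then G.edgeCos s e else 0) - if G.o e = v then 1 else 0) *
          a e := by
        rw [sum_extend_val_mul, Finset.mul_sum]
        exact Fintype.sum_congr _ _ fun e => by ring
    _ = _ := by
        by_cases hv : v ∈ G.incVerts S
        · rw [Function.extend_val_apply hv]
          rfl
        · rw [Function.extend_val_apply' hv, Pi.zero_apply, Finset.sum_eq_zero fun e _ => ?_]
          have ht : G.t e ≠ v := fun h => hv (h ▸ t_mem_incVerts e.2)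
          have ho : G.o e ≠ v := fun h => hv (h ▸ o_mem_incVerts e.2)
          rw [if_neg ht, if_neg ho, sub_zero, zero_mul]

section Resonance

variable {lam : ℝ}

lemma sqrt_mul_eq_nat_mul_pi (hlam : 0 < lam) {e : G.E} {k : ℕ} (hk : G.L e = k * (π / √lam)) :
    √lam * G.L e = k * π := by
  rw [hk]
  field_simp

lemma mem_lamEdges_iff_sin_eq_zero (hlam : 0 < lam) (e : G.E) :
    e ∈ G.lamEdges lam ↔ Real.sin (√lam * G.L e) = 0 := by
  refine ⟨fun ⟨k, _, hk⟩ => by rw [sqrt_mul_eq_nat_mul_pi hlam hk, Real.sin_nat_mul_pi],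
    fun h => ?_⟩
  obtain ⟨n, hn⟩ := Real.sin_eq_zero_iff.mp h
  have hn_pos : (0 : ℝ) < n := by
    have := mul_pos (Real.sqrt_pos.mpr hlam) (G.L_pos e)
    rw [← hn] at this
    exact pos_of_mul_pos_left this Real.pi_pos.le
  lift n to ℕ using by exact_mod_cast hn_pos.le
  refine ⟨n, by exact_mod_cast hn_pos, ?_⟩
  field_simp
  push_cast at hn
  linarith

lemma edgeCos_eq_neg_one_pow (hlam : 0 < lam) {e : G.E} {k : ℕ} (hk : G.L e = k * (π / √lam)) :
    G.edgeCos √lam e = (-1) ^ k := by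
  rw [edgeCos, sqrt_mul_eq_nat_mul_pi hlam hk, Real.cos_nat_mul_pi]
  push_cast
  rfl

lemma edgeCos_sq_of_mem_lamEdges (hlam : 0 < lam) {e : G.E} (he : e ∈ G.lamEdges lam) :
    G.edgeCos √lam e ^ 2 = 1 := by
  obtain ⟨k, _, hk⟩ := he
  rw [edgeCos_eq_neg_one_pow hlam hk, ← pow_mul, pow_mul', neg_one_sq, one_pow]

lemma Cycle.prod_edgeCos_eq_neg_one (hlam : 0 < lam) (c : G.Cycle) (hc : c.inSub (G.lamEdges lam))
    (hodd : c.oddLength (π / √lam)) : ∏ i, G.edgeCos √lam (c.edge i) = -1 := by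
  choose k _ hk using hc
  obtain ⟨m, hm, hlen⟩ := hodd
  have hsum : ∑ i, k i = m := by
    have hx : π / √lam ≠ 0 := (div_pos Real.pi_pos (Real.sqrt_pos.mpr hlam)).ne'
    rw [Cycle.length, Fintype.sum_congr _ _ hk, ← Finset.sum_mul] at hlen
    exact_mod_cast mul_right_cancel₀ hx hlen
  rw [Fintype.prod_congr _ _ fun i => edgeCos_eq_neg_one_pow hlam (hk i),
    Finset.prod_pow_eq_pow_sum, hsum, hm.neg_one_pow]

lemma ofReal_sqrt_sq (hlam : 0 < lam) : (√lam : ℂ) ^ 2 = lam := by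
  exact_mod_cast Real.sq_sqrt hlam.le

lemma sinWave_mem_resSet (hlam : 0 < lam) {a : G.lamEdges lam → ℂ}
    (ha : G.signedIncidence (G.lamEdges lam) (G.edgeCos √lam) *ᵥ a = 0) :
    G.sinWave (G.lamEdges lam) √lam a ∈ G.resSet lam := by
  have hvanish : ∀ e, G.sinWave _ √lam a e 0 = 0 ∧ G.sinWave _ √lam a e (G.L e) = 0 := fun e => by
    simp only [sinWave_apply, mul_zero, Real.sin_zero, Complex.ofReal_zero, true_and]
    by_cases he : e ∈ G.lamEdges lam
    · rw [(mem_lamEdges_iff_sin_eq_zero hlam e).mp he, Complex.ofReal_zero, mul_zero]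
    · rw [Function.extend_val_apply' he, Pi.zero_apply, zero_mul]
  refine ⟨⟨⟨fun e => ?_, fun e x => ?_, ?_, ?_, ?_⟩, fun v => ?_⟩, hvanish⟩
  · rw [sinWave_apply]
    exact contDiff_const.mul (contDiff_ofReal_sin_mul _)
  · simp only [sinWave_apply, deriv_const_mul_field', deriv_deriv_ofReal_sin_mul,
      ofReal_sqrt_sq hlam]
    ring
  · exact fun e₁ e₂ _ => by rw [(hvanish e₁).1, (hvanish e₂).1]
  · exact fun e₁ e₂ _ => by rw [(hvanish e₁).1, (hvanish e₂).2]
  · exact fun e₁ e₂ _ => by rw [(hvanish e₁).2, (hvanish e₂).2]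
  · rw [normDer_sinWave, ha, Function.extend_zero, Pi.zero_apply, mul_zero]

lemma exists_sinWave_eq_of_mem_resSet (hlam : 0 < lam) {f : G.E → ℝ → ℂ} (hf : f ∈ G.resSet lam) :
    ∃ a ∈ LinearMap.ker (G.signedIncidence (G.lamEdges lam) (G.edgeCos √lam)).mulVecLin,
      G.sinWave (G.lamEdges lam) √lam a = f := by
  obtain ⟨⟨⟨hsmooth, hode, -⟩, hkirchhoff⟩, hvanish⟩ := hf
  have hs : √lam ≠ 0 := (Real.sqrt_pos.mpr hlam).ne'
  have hform : ∀ e x, f e x = deriv (f e) 0 / √lam * Real.sin (√lam * x) := fun e =>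
    eq_mul_sin_of_deriv_deriv hs (hsmooth e) (by simpa [ofReal_sqrt_sq hlam] using hode e)
      (hvanish e).1
  have hcoef : ∀ e ∉ G.lamEdges lam, deriv (f e) 0 / √lam = 0 := fun e he => by
    have hsin : (Real.sin (√lam * G.L e) : ℂ) ≠ 0 := by
      exact_mod_cast mt (mem_lamEdges_iff_sin_eq_zero hlam e).mpr he
    have := (hvanish e).2
    rw [hform] at this
    exact (mul_eq_zero.mp this).resolve_right hsin
  let a : G.lamEdges lam → ℂ := fun e => deriv (f e) 0 / √lam
  have hfa : G.sinWave _ √lam a = f := by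
    funext e x
    rw [sinWave_apply, hform]
    by_cases he : e ∈ G.lamEdges lam
    · rw [Function.extend_val_apply he]
    · rw [Function.extend_val_apply' he, hcoef e he, Pi.zero_apply]
  refine ⟨a, funext fun v => ?_, hfa⟩
  have := hkirchhoff v
  rw [← hfa, normDer_sinWave, Function.extend_val_apply v.2] at this
  exact (mul_eq_zero.mp this).resolve_left (by exact_mod_cast hs)

lemma resSet_eq_image_ker (hlam : 0 < lam) :
    G.resSet lam = G.sinWave (G.lamEdges lam) √lam ''
      LinearMap.ker (G.signedIncidence (G.lamEdges lam) (G.edgeCos √lam)).mulVecLin :=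
  Set.ext fun _ => ⟨exists_sinWave_eq_of_mem_resSet hlam,
    by rintro ⟨a, ha, rfl⟩; exact sinWave_mem_resSet hlam ha⟩

lemma dimRes_eq_finrank_ker (hlam : 0 < lam) :
    G.dimRes lam = Module.finrank ℂ
      (LinearMap.ker (G.signedIncidence (G.lamEdges lam) (G.edgeCos √lam)).mulVecLin) := by
  rw [dimRes, resSet_eq_image_ker hlam, ← Submodule.map_coe, Submodule.span_eq]
  exact (LinearEquiv.finrank_eq (Submodule.equivMapOfInjective _
    (sinWave_injective (Real.sqrt_pos.mpr hlam).ne') _)).symm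

end Resonance

end MetricGraph

/-- if `G_λ` is connected and contains a cycle of odd length with
respect to `π/√λ`, then `dim R(G, λ) = β₁(G_λ) - 1`. -/
theorem statement_2 (G : MetricGraph) (lam : ℝ) (hlam : 0 < lam)
    (hconn : ∀ v ∈ G.incVerts (G.lamEdges lam), ∀ w ∈ G.incVerts (G.lamEdges lam),
      G.connRel (G.lamEdges lam) v w)
    (hodd : ∃ c : G.Cycle, c.inSub (G.lamEdges lam) ∧ c.oddLength (π / Real.sqrt lam)) :
    (G.dimRes lam : ℤ) = G.beta1 (G.lamEdges lam) - 1 := by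
  obtain ⟨c, hc, hc_odd⟩ := hodd
  have hinj := MetricGraph.injective_transpose_signedIncidence hconn
    (fun _ he => MetricGraph.edgeCos_sq_of_mem_lamEdges hlam he) c hc
    (c.prod_edgeCos_eq_neg_one hlam hc hc_odd)
  have hβ₀ := MetricGraph.beta0_eq_one hconn ⟨_, MetricGraph.o_mem_incVerts (hc ⟨0, c.npos⟩)⟩
  rw [MetricGraph.beta1, hβ₀, MetricGraph.dimRes_eq_finrank_ker hlam,
    ← MetricGraph.finrank_ker_signedIncidence_add_ncard hinj]
  push_cast
  ring
end
end

section
/- Let G be a finite metric graph, let λ > 0, and let C be a cycle in G whose total length is an odd integer multiple of π/√λ. If f ∈ R(G, λ) vanishes identically on every edge of G not belonging to C, then f = 0. -/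
open Real Set Filter Topology

noncomputable section

/-!
On every edge an element of `R(G, λ)` is a multiple of `sin (√λ x)`. Write `S i` for its
derivative at the start of the `i`-th edge of `C`, taken along `C`; then the derivative at the
end of that edge is `cos (√λ Lᵢ) S i`, and `S i sin (√λ Lᵢ) = 0`. As `f` vanishes off `C`, the
Kirchhoff condition at the vertex joining two consecutive edges of `C` reads
`S (i + 1) = cos (√λ Lᵢ) S i`. Going once around `C`, either `S` vanishes, and then so does `f`,
or `∏ cos (√λ Lᵢ) = 1` and no `S i` vanishes. In the latter case every `sin (√λ Lᵢ)` vanishes,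
so the product equals `cos (√λ |C|) = cos (m π) = -1` for the odd `m` with `|C| = m π / √λ`.
-/

theorem eq_mul_exp_of_deriv_eq_mul {c : ℂ} {u : ℝ → ℂ} (hu : Differentiable ℝ u)
    (hderiv : ∀ x, deriv u x = c * u x) (x : ℝ) : u x = u 0 * Complex.exp (c * x) := by
  have hconst : ∀ y : ℝ, HasDerivAt (fun y : ℝ => u y * Complex.exp (-c * y)) 0 y := by
    intro y
    have hexp : HasDerivAt (fun y : ℝ => Complex.exp (-c * y)) (Complex.exp (-c * y) * -c) y :=
      (((hasDerivAt_id (y : ℂ)).const_mul (-c)).cexp.comp_ofReal).congr_deriv (by simp)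
    refine ((hu y).hasDerivAt.mul hexp).congr_deriv ?_
    rw [hderiv]
    ring
  have h := is_const_of_deriv_eq_zero (fun y => (hconst y).differentiableAt)
    (fun y => (hconst y).deriv) x 0
  simp only [Complex.ofReal_zero, mul_zero, Complex.exp_zero, mul_one] at h
  rw [← h, mul_assoc, ← Complex.exp_add, neg_mul, neg_add_cancel, Complex.exp_zero, mul_one]

theorem harmonic_eq_sin_of_apply_zero {ω : ℝ} {g : ℝ → ℂ} (hg : ContDiff ℝ 2 g)
    (hode : ∀ x, deriv (deriv g) x = -(ω : ℂ) ^ 2 * g x) (h0 : g 0 = 0) (x : ℝ) :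
    ω * g x = deriv g 0 * Real.sin (ω * x) ∧ deriv g x = deriv g 0 * Real.cos (ω * x) := by
  have hg1 : Differentiable ℝ g := hg.differentiable (by norm_num)
  have hg2 : Differentiable ℝ (deriv g) :=
    (hg.iterate_deriv' 1 1).differentiable (by norm_num)
  -- `g' + σ ω g` solves `u' = σ ω u` as soon as `σ ^ 2 = -1`
  have hexp : ∀ σ : ℂ, σ ^ 2 = -1 →
      deriv g x + σ * ω * g x = deriv g 0 * Complex.exp (σ * ω * x) := by
    intro σ hσ
    have hu : ∀ y, deriv (fun y => deriv g y + σ * ω * g y) y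
        = σ * ω * (deriv g y + σ * ω * g y) := by
      intro y
      rw [deriv_fun_add (hg2 y) ((hg1 y).const_mul _), deriv_const_mul _ (hg1 y), hode]
      linear_combination -(ω : ℂ) ^ 2 * g y * hσ
    simpa [h0] using eq_mul_exp_of_deriv_eq_mul (hg2.add (hg1.const_mul _)) hu x
  have hp := hexp Complex.I Complex.I_sq
  have hm := hexp (-Complex.I) (by simp)
  rw [show Complex.I * ω * x = ((ω * x : ℝ) : ℂ) * Complex.I by push_cast; ring,
    Complex.exp_mul_I, ← Complex.ofReal_cos, ← Complex.ofReal_sin] at hp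
  rw [show -Complex.I * ω * x = ((-(ω * x) : ℝ) : ℂ) * Complex.I by push_cast; ring,
    Complex.exp_mul_I, ← Complex.ofReal_cos, ← Complex.ofReal_sin, Real.cos_neg,
    Real.sin_neg, Complex.ofReal_neg] at hm
  constructor
  · linear_combination (-Complex.I / 2) * (hp - hm)
      + ((ω : ℂ) * g x - deriv g 0 * Real.sin (ω * x)) * Complex.I_sq
  · linear_combination (hp + hm) / 2

theorem deriv_eq_zero_of_eqOn_Icc {F : Type*} [NormedAddCommGroup F] [NormedSpace ℝ F]
    {g : ℝ → F} {a b x : ℝ} (hab : a < b) (hg : DifferentiableAt ℝ g x)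
    (h : EqOn g 0 (Icc a b)) (hx : x ∈ Icc a b) : deriv g x = 0 :=
  (uniqueDiffOn_Icc hab x hx).eq_deriv _ hg.hasDerivAt.hasDerivWithinAt
    ((hasDerivWithinAt_const x _ 0).congr h (h hx))

theorem Real.cos_sum_eq_prod_cos_of_sin_eq_zero {ι : Type*} (s : Finset ι) (a : ι → ℝ)
    (h : ∀ i ∈ s, Real.sin (a i) = 0) : Real.cos (∑ i ∈ s, a i) = ∏ i ∈ s, Real.cos (a i) := by
  induction s using Finset.cons_induction with
  | empty => simp
  | cons j s hj ih =>
    rw [Finset.sum_cons, Finset.prod_cons, Real.cos_add, h j (Finset.mem_cons_self j s),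
      zero_mul, sub_zero, ih fun i hi => h i (Finset.mem_cons_of_mem hi)]

open Fin.NatCast in
theorem eq_zero_of_cyclic_recurrence {R : Type*} [CommRing R] [IsDomain R] {n : ℕ} [NeZero n]
    {a S : Fin n → R} (hrec : ∀ i, S (i + 1) = a i * S i)
    (hprod : (∀ i, S i ≠ 0) → ∏ i, a i ≠ 1) (i : Fin n) : S i = 0 := by
  have hiter : ∀ k : ℕ, S (k : Fin n) = (∏ j ∈ Finset.range k, a (j : Fin n)) * S 0 := by
    intro k
    induction k with
    | zero => simp
    | succ k ih =>
      rw [Nat.cast_succ, hrec, ih, Finset.prod_range_succ]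
      ring
  have hperiod : S 0 = (∏ j, a j) * S 0 := by
    simpa [← Fin.prod_univ_eq_prod_range (fun j => a (j : Fin n))] using hiter n
  by_contra hi
  have hS0 : S 0 ≠ 0 := fun h0 => hi (by simpa [h0] using hiter i)
  have hone : ∏ j, a j = 1 := (mul_eq_right₀ hS0).mp hperiod.symm
  have ha : ∀ j, a j ≠ 0 := fun j =>
    Finset.prod_ne_zero_iff.mp (hone ▸ one_ne_zero) j (Finset.mem_univ j)
  refine hprod (fun j => ?_) hone
  rw [← Fin.cast_val_eq_self j, hiter]
  exact mul_ne_zero (Finset.prod_ne_zero_iff.mpr fun k _ => ha k) hS0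

structure IsDirichletSol (ω L : ℝ) (g : ℝ → ℂ) : Prop where
  contDiff : ContDiff ℝ 2 g
  ode : ∀ x, deriv (deriv g) x = -(ω : ℂ) ^ 2 * g x
  left : g 0 = 0
  right : g L = 0

/-- The derivative of `g` at the initial point of `[0, L]` traversed in direction `d`
(`d = false` runs from `L` to `0`), taken along the direction of traversal; `dstDeriv` is the
same at the terminal point. -/
def srcDeriv (g : ℝ → ℂ) (L : ℝ) (d : Bool) : ℂ := if d then deriv g 0 else -deriv g L

def dstDeriv (g : ℝ → ℂ) (L : ℝ) (d : Bool) : ℂ := if d then deriv g L else -deriv g 0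

namespace IsDirichletSol

variable {ω L : ℝ} {g : ℝ → ℂ}

theorem deriv_right (h : IsDirichletSol ω L g) : deriv g L = deriv g 0 * Real.cos (ω * L) :=
  (harmonic_eq_sin_of_apply_zero h.contDiff h.ode h.left L).2

theorem deriv_left_mul_sin (h : IsDirichletSol ω L g) : deriv g 0 * Real.sin (ω * L) = 0 := by
  rw [← (harmonic_eq_sin_of_apply_zero h.contDiff h.ode h.left L).1, h.right, mul_zero]

theorem eq_zero_of_deriv_left (h : IsDirichletSol ω L g) (hω : ω ≠ 0) (h0 : deriv g 0 = 0)
    (x : ℝ) : g x = 0 := by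
  have hx := (harmonic_eq_sin_of_apply_zero h.contDiff h.ode h.left x).1
  rw [h0, zero_mul, mul_eq_zero] at hx
  exact hx.resolve_left (Complex.ofReal_ne_zero.mpr hω)

theorem deriv_eq_zero_of_eqOn_Icc (h : IsDirichletSol ω L g) (hL : 0 < L)
    (hzero : EqOn g 0 (Icc 0 L)) : deriv g 0 = 0 ∧ deriv g L = 0 := by
  have h0 := _root_.deriv_eq_zero_of_eqOn_Icc hL
    (h.contDiff.differentiable two_ne_zero 0) hzero ⟨le_rfl, hL.le⟩
  exact ⟨h0, by rw [h.deriv_right, h0, zero_mul]⟩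

theorem dstDeriv_eq (h : IsDirichletSol ω L g) (d : Bool) :
    dstDeriv g L d = Real.cos (ω * L) * srcDeriv g L d := by
  have hpyth : (Real.sin (ω * L) : ℂ) ^ 2 + (Real.cos (ω * L) : ℂ) ^ 2 = 1 := by
    exact_mod_cast Real.sin_sq_add_cos_sq (ω * L)
  cases d
  · simp only [dstDeriv, srcDeriv, Bool.false_eq_true, if_false, h.deriv_right]
    linear_combination deriv g 0 * hpyth - Real.sin (ω * L) * h.deriv_left_mul_sin
  · simp only [dstDeriv, srcDeriv, if_true, h.deriv_right]
    ring

theorem srcDeriv_mul_sin (h : IsDirichletSol ω L g) (d : Bool) :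
    srcDeriv g L d * Real.sin (ω * L) = 0 := by
  cases d
  · simp only [srcDeriv, Bool.false_eq_true, if_false, h.deriv_right]
    linear_combination -Real.cos (ω * L) * h.deriv_left_mul_sin
  · simpa only [srcDeriv, if_true] using h.deriv_left_mul_sin

theorem eq_zero_of_srcDeriv (h : IsDirichletSol ω L g) (hω : ω ≠ 0) {d : Bool}
    (hd : srcDeriv g L d = 0) (x : ℝ) : g x = 0 := by
  refine h.eq_zero_of_deriv_left hω ?_ x
  cases d
  · have hpyth : (Real.sin (ω * L) : ℂ) ^ 2 + (Real.cos (ω * L) : ℂ) ^ 2 = 1 := by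
      exact_mod_cast Real.sin_sq_add_cos_sq (ω * L)
    simp only [srcDeriv, Bool.false_eq_true, if_false, h.deriv_right, neg_eq_zero] at hd
    linear_combination -deriv g 0 * hpyth + Real.sin (ω * L) * h.deriv_left_mul_sin
      + Real.cos (ω * L) * hd
  · simpa only [srcDeriv, if_true] using hd

end IsDirichletSol

namespace MetricGraph

variable {G : MetricGraph}

theorem isDirichletSol_of_mem_resSet {lam : ℝ} (hlam : 0 ≤ lam) {f : G.E → ℝ → ℂ}
    (hf : f ∈ G.resSet lam) (e : G.E) : IsDirichletSol (√lam) (G.L e) (f e) where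
  contDiff := hf.1.1.1 e
  ode x := by rw [hf.1.1.2.1, ← Complex.ofReal_pow, Real.sq_sqrt hlam]
  left := (hf.2 e).1
  right := (hf.2 e).2

theorem normDer_eq_sum (f : G.E → ℝ → ℂ) (v : G.V) :
    G.normDer f v = ∑ e, ((if G.t e = v then deriv (f e) (G.L e) else 0) -
      (if G.o e = v then deriv (f e) 0 else 0)) := by
  rw [normDer, Finset.sum_filter, Finset.sum_filter, Finset.sum_sub_distrib]

theorem incidence_term_eq_oriented (f : G.E → ℝ → ℂ) (v : G.V) (e : G.E) (d : Bool) :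
    (if G.t e = v then deriv (f e) (G.L e) else 0) - (if G.o e = v then deriv (f e) 0 else 0) =
      (if G.edst e d = v then dstDeriv (f e) (G.L e) d else 0) -
        (if G.esrc e d = v then srcDeriv (f e) (G.L e) d else 0) := by
  cases d
  · simp only [edst, esrc, dstDeriv, srcDeriv, Bool.false_eq_true, if_false]
    split_ifs <;> ring
  · simp only [edst, esrc, dstDeriv, srcDeriv, if_true]

instance (c : G.Cycle) : NeZero c.n := ⟨c.npos.ne'⟩

namespace Cycle

def vertex (c : G.Cycle) (i : Fin c.n) : G.V := G.esrc (c.edge i) (c.dir i)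

theorem esrc_eq_vertex (c : G.Cycle) (i : Fin c.n) :
    G.esrc (c.edge i) (c.dir i) = c.vertex i := rfl

theorem edst_eq_vertex_add_one (c : G.Cycle) (i : Fin c.n) :
    G.edst (c.edge i) (c.dir i) = c.vertex (i + 1) := by
  have hsucc : (⟨((i : ℕ) + 1) % c.n, Nat.mod_lt _ c.npos⟩ : Fin c.n) = i + 1 := by
    ext
    simp [Fin.val_add]
  rw [c.chain i, hsucc, vertex]

theorem normDer_vertex_add_one (c : G.Cycle) {f : G.E → ℝ → ℂ}
    (hoff : ∀ e ∉ Set.range c.edge, deriv (f e) 0 = 0 ∧ deriv (f e) (G.L e) = 0)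
    (i : Fin c.n) :
    G.normDer f (c.vertex (i + 1)) =
      dstDeriv (f (c.edge i)) (G.L (c.edge i)) (c.dir i) -
        srcDeriv (f (c.edge (i + 1))) (G.L (c.edge (i + 1))) (c.dir (i + 1)) := by
  rw [normDer_eq_sum, ← Fintype.sum_of_injective c.edge c.edge_inj _ _ ?off
    (fun j => (incidence_term_eq_oriented f _ (c.edge j) (c.dir j)).symm)]
  · have hinj : Function.Injective c.vertex := c.vert_inj
    simp only [Finset.sum_sub_distrib, c.edst_eq_vertex_add_one, c.esrc_eq_vertex,
      hinj.eq_iff, add_left_inj, Finset.sum_ite_eq', Finset.mem_univ, if_true]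
  · intro e he
    simp [hoff e he]

theorem prod_cos_eq_neg_one (c : G.Cycle) {ω : ℝ} (hω : 0 < ω) (hodd : c.oddLength (π / ω))
    (hsin : ∀ i, Real.sin (ω * G.L (c.edge i)) = 0) :
    ∏ i, Real.cos (ω * G.L (c.edge i)) = -1 := by
  obtain ⟨m, hm, hlen⟩ := hodd
  have hsum : ∑ i, ω * G.L (c.edge i) = m * π := by
    rw [← Finset.mul_sum]
    change ω * c.length = _
    rw [hlen]
    field_simp
  rw [← Real.cos_sum_eq_prod_cos_of_sin_eq_zero _ _ fun i _ => hsin i, hsum,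
    Real.cos_nat_mul_pi, hm.neg_one_pow]

end Cycle

end MetricGraph

/-- if `C` is a cycle in `G` whose total length is an odd integer
multiple of `π/√λ` and `f ∈ R(G, λ)` vanishes identically on every edge of `G` not
belonging to `C`, then `f = 0`. -/
theorem statement_6 (G : MetricGraph) (lam : ℝ) (hlam : 0 < lam) (c : G.Cycle)
    (hodd : c.oddLength (π / Real.sqrt lam))
    (f : G.E → ℝ → ℂ) (hf : f ∈ G.resSet lam)
    (hvanish : ∀ e, (¬ ∃ i, c.edge i = e) → ∀ x ∈ Set.Icc (0 : ℝ) (G.L e), f e x = 0) :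
    ∀ e, ∀ x ∈ Set.Icc (0 : ℝ) (G.L e), f e x = 0 := by
  have hω : 0 < √lam := Real.sqrt_pos.mpr hlam
  have hsol := G.isDirichletSol_of_mem_resSet hlam.le hf
  have hoff : ∀ e ∉ Set.range c.edge, deriv (f e) 0 = 0 ∧ deriv (f e) (G.L e) = 0 :=
    fun e he => (hsol e).deriv_eq_zero_of_eqOn_Icc (G.L_pos e) (hvanish e he)
  set S : Fin c.n → ℂ := fun i => srcDeriv (f (c.edge i)) (G.L (c.edge i)) (c.dir i)
  have hrec : ∀ i, S (i + 1) = Real.cos (√lam * G.L (c.edge i)) * S i := fun i => by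
    have h := c.normDer_vertex_add_one hoff i
    rw [hf.1.2, (hsol _).dstDeriv_eq] at h
    linear_combination h
  have hS : ∀ i, S i = 0 := by
    refine eq_zero_of_cyclic_recurrence hrec fun hne => ?_
    have hsin : ∀ i, Real.sin (√lam * G.L (c.edge i)) = 0 := fun i =>
      Complex.ofReal_eq_zero.mp
        ((mul_eq_zero.mp ((hsol _).srcDeriv_mul_sin _)).resolve_left (hne i))
    rw [← Complex.ofReal_prod, c.prod_cos_eq_neg_one hω hodd hsin]
    norm_num
  intro e x hx
  by_cases he : e ∈ Set.range c.edge
  · obtain ⟨i, rfl⟩ := he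
    exact (hsol _).eq_zero_of_srcDeriv hω.ne' (hS i) x
  · exact hvanish e he x hx
end
end

section
/- Let G be a finite metric graph and let λ > 0. Suppose some connected component of the subgraph G_λ contains two cycles with distinct edge sets, each of whose lengths is an odd integer multiple of π/√λ. Then λ is a resonance of G, i.e., R(G, λ) ≠ {0}. -/
open Real Set Filter Topology

noncomputable section

/-! Write `√λ L_e = k_e π` for the edges of `G_λ` and `ε_e = (-1)^{k_e}`. Edgewise
`f_e(x) = g_e sin(√λ x)` with integer coefficients `g` supported on `G_λ` vanishes at every
vertex, and its Kirchhoff condition at `v` reads `∑_{t(e) = v} ε_e g_e = ∑_{o(e) = v} g_e`.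
Following `sin(√λ s)` in arc length `s` along a walk gives coefficients whose Kirchhoff defect
is `-1` at the start and `∏ ε` at the end of the walk; around a cycle of odd length `∏ ε = -1`,
so the defect of a cycle is `-2` at its start. For odd cycles `C₁`, `C₂` joined by a walk `P`,
the combination `C₁ - 2 P ∓ C₂` therefore satisfies every Kirchhoff condition, and modulo `2`
it is the indicator of the symmetric difference of the two edge sets, hence nonzero. -/

theorem Int.units_cast_zmod_two (u : ℤˣ) : ((u : ℤ) : ZMod 2) = 1 := by
  rcases Int.units_eq_one_or u with rfl | rfl <;> rfl

theorem hasDerivAt_csin_ofReal_mul (ω x : ℝ) :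
    HasDerivAt (fun y : ℝ => Complex.sin (ω * y)) (ω * Complex.cos (ω * x)) x := by
  simpa [mul_comm] using ((hasDerivAt_id (x : ℂ)).const_mul (ω : ℂ)).csin.comp_ofReal

theorem hasDerivAt_ccos_ofReal_mul (ω x : ℝ) :
    HasDerivAt (fun y : ℝ => Complex.cos (ω * y)) (-(ω * Complex.sin (ω * x))) x := by
  simpa [mul_comm] using ((hasDerivAt_id (x : ℂ)).const_mul (ω : ℂ)).ccos.comp_ofReal

namespace MetricGraph

variable {G : MetricGraph}

inductive IsWalk (S : Set G.E) : List (G.E × Bool) → G.V → G.V → Prop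
  | nil (u : G.V) : IsWalk S [] u u
  | cons {e : G.E} {d : Bool} {w : List (G.E × Bool)} {v : G.V} :
      e ∈ S → IsWalk S w (G.edst e d) v → IsWalk S ((e, d) :: w) (G.esrc e d) v

namespace IsWalk

variable {S : Set G.E}

theorem append {w₁ w₂ : List (G.E × Bool)} {u v x : G.V}
    (h₁ : IsWalk S w₁ u v) (h₂ : IsWalk S w₂ v x) : IsWalk S (w₁ ++ w₂) u x := by
  induction h₁ with
  | nil => exact h₂
  | cons he _ ih => exact cons he (ih h₂)

theorem single {e : G.E} (he : e ∈ S) (d : Bool) :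
    IsWalk S [(e, d)] (G.esrc e d) (G.edst e d) :=
  cons he (nil _)

theorem reverse {w : List (G.E × Bool)} {u v : G.V} (h : IsWalk S w u v) :
    IsWalk S (w.reverse.map fun s => (s.1, !s.2)) v u := by
  induction h with
  | nil => exact nil _
  | @cons e d _ _ he _ ih =>
    have hback : IsWalk S [(e, !d)] (G.edst e d) (G.esrc e d) := by
      cases d <;> exact single he _
    simpa using ih.append hback

end IsWalk

theorem exists_isWalk_of_connRel {S : Set G.E} {u v : G.V} (h : G.connRel S u v) :
    ∃ w, IsWalk S w u v := by
  induction h with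
  | rel a b hab =>
    obtain ⟨e, he, rfl, rfl⟩ := hab
    exact ⟨_, IsWalk.single he true⟩
  | refl a => exact ⟨[], IsWalk.nil a⟩
  | symm a b _ ih =>
    obtain ⟨w, hw⟩ := ih
    exact ⟨_, hw.reverse⟩
  | trans a b c _ _ ih₁ ih₂ =>
    obtain ⟨w₁, hw₁⟩ := ih₁
    obtain ⟨w₂, hw₂⟩ := ih₂
    exact ⟨_, hw₁.append hw₂⟩

theorem isWalk_ofFn {S : Set G.E} (f : ℕ → G.E × Bool) (hS : ∀ i, (f i).1 ∈ S)
    (hf : ∀ i, G.edst (f i).1 (f i).2 = G.esrc (f (i + 1)).1 (f (i + 1)).2) (k : ℕ) :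
    IsWalk S (List.ofFn fun i : Fin k => f i) (G.esrc (f 0).1 (f 0).2)
      (G.esrc (f k).1 (f k).2) := by
  induction k with
  | zero => exact IsWalk.nil _
  | succ k ih =>
    rw [List.ofFn_succ', List.concat_eq_append]
    simpa [hf k] using ih.append (IsWalk.single (hS k) (f k).2)

namespace Cycle

def walk (c : G.Cycle) : List (G.E × Bool) := List.ofFn fun i => (c.edge i, c.dir i)

theorem isWalk_walk {S : Set G.E} (c : G.Cycle) (hc : c.inSub S) :
    IsWalk S c.walk c.start c.start := by
  let f (i : ℕ) : G.E × Bool :=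
    (c.edge ⟨i % c.n, Nat.mod_lt _ c.npos⟩, c.dir ⟨i % c.n, Nat.mod_lt _ c.npos⟩)
  have hwalk := isWalk_ofFn (S := S) f (fun i => hc _)
    (fun i => by simpa only [f, Nat.mod_add_mod] using c.chain ⟨i % c.n, Nat.mod_lt _ c.npos⟩)
    c.n
  simpa [walk, f, Nat.mod_eq_of_lt, start] using hwalk

theorem count_walk (c : G.Cycle) (e : G.E) :
    (c.walk.map Prod.fst).count e = if e ∈ Set.range c.edge then 1 else 0 := by
  have hnodup : (c.walk.map Prod.fst).Nodup := by
    simpa [walk, List.map_ofFn, Function.comp_def, List.nodup_ofFn] using c.edge_inj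
  split_ifs with he
  · exact List.count_eq_one_of_mem hnodup (by simpa [walk, List.map_ofFn] using he)
  · exact List.count_eq_zero_of_not_mem (by simpa [walk, List.map_ofFn] using he)

end Cycle

section Signs

/-! `ε e` stands for `cos (√λ L_e) = ±1`. -/

variable (ε : G.E → ℤˣ)

def kirchhoffDefect : (G.E → ℤ) →ₗ[ℤ] (G.V → ℤ) where
  toFun α v := (∑ e ∈ Finset.univ.filter fun e => G.t e = v, (ε e : ℤ) * α e) -
    ∑ e ∈ Finset.univ.filter fun e => G.o e = v, α e
  map_add' α β := by
    funext v
    simp only [Pi.add_apply, mul_add, Finset.sum_add_distrib]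
    ring
  map_smul' c α := by
    funext v
    simp only [Pi.smul_apply, smul_eq_mul, RingHom.id_apply, Finset.mul_sum, mul_sub]
    congr 1
    exact Finset.sum_congr rfl fun e _ => by ring

theorem kirchhoffDefect_single (e : G.E) (a : ℤ) :
    kirchhoffDefect ε (Pi.single e a) =
      ((ε e : ℤ) * a) • Pi.single (G.t e) 1 - a • Pi.single (G.o e) 1 := by
  funext v
  simp [kirchhoffDefect, Pi.single_apply, eq_comm]

/-- On an edge `e` traversed backwards, `sin (√λ (L_e - x)) = -ε e sin (√λ x)`; after the edge
the phase of `sin (√λ s)` has advanced by `√λ L_e`, which multiplies the rest by `ε e`. -/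
def walkCoeff : List (G.E × Bool) → G.E → ℤ
  | [] => 0
  | (e, d) :: w => Pi.single e (if d then 1 else -(ε e : ℤ)) + (ε e : ℤ) • walkCoeff w

def walkSign (w : List (G.E × Bool)) : ℤˣ := (w.map fun s => ε s.1).prod

theorem kirchhoffDefect_walkCoeff {S : Set G.E} {w : List (G.E × Bool)} {u v : G.V}
    (h : IsWalk S w u v) :
    kirchhoffDefect ε (walkCoeff ε w) = (walkSign ε w : ℤ) • Pi.single v 1 - Pi.single u 1 := by
  induction h with
  | nil => simp [walkCoeff, walkSign]
  | @cons e d w v _ _ ih =>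
    have hsq : (ε e : ℤ) * ε e = 1 := by rw [← Units.val_mul, Int.units_mul_self, Units.val_one]
    rw [walkCoeff, map_add, map_smul, ih, kirchhoffDefect_single]
    simp only [walkSign, List.map_cons, List.prod_cons, Units.val_mul]
    cases d
    · simp only [edst, esrc, Bool.false_eq_true, if_false]
      linear_combination (norm := module) -(hsq • Pi.single (G.t e) (1 : ℤ))
    · simp only [edst, esrc, if_true]
      module

theorem walkCoeff_eq_zero_of_not_mem {S : Set G.E} {w : List (G.E × Bool)} {u v : G.V}
    (h : IsWalk S w u v) {e : G.E} (he : e ∉ S) : walkCoeff ε w e = 0 := by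
  induction h with
  | nil => rfl
  | @cons e' d w v he' _ ih =>
    have hne : e ≠ e' := fun h => he (h ▸ he')
    simp [walkCoeff, ih, hne]

theorem walkCoeff_cast_zmod_two (w : List (G.E × Bool)) (e : G.E) :
    (walkCoeff ε w e : ZMod 2) = (w.map Prod.fst).count e := by
  induction w with
  | nil => simp [walkCoeff]
  | cons s w ih =>
    obtain ⟨e', d⟩ := s
    rcases eq_or_ne e e' with rfl | he
    · cases d <;> simp [walkCoeff, ih, Int.units_cast_zmod_two, add_comm]
    · simp [walkCoeff, ih, Int.units_cast_zmod_two, he, he.symm]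

theorem Cycle.walkSign_walk (c : G.Cycle) : walkSign ε c.walk = ∏ i, ε (c.edge i) := by
  simp [walkSign, Cycle.walk, List.map_ofFn, List.prod_ofFn, Function.comp_def]

theorem exists_ne_zero_kirchhoffDefect_eq_zero {S : Set G.E} (c₁ c₂ : G.Cycle)
    (h₁ : c₁.inSub S) (h₂ : c₂.inSub S)
    (hsign₁ : walkSign ε c₁.walk = -1) (hsign₂ : walkSign ε c₂.walk = -1)
    (hdistinct : Set.range c₁.edge ≠ Set.range c₂.edge) (hconn : G.connRel S c₁.start c₂.start) :
    ∃ g : G.E → ℤ, (∀ e ∉ S, g e = 0) ∧ kirchhoffDefect ε g = 0 ∧ g ≠ 0 := by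
  obtain ⟨p, hp⟩ := exists_isWalk_of_connRel hconn
  have hw₁ := c₁.isWalk_walk h₁
  have hw₂ := c₂.isWalk_walk h₂
  refine ⟨walkCoeff ε c₁.walk - (2 : ℤ) • walkCoeff ε p -
    (walkSign ε p : ℤ) • walkCoeff ε c₂.walk, fun e he => ?_, ?_, fun hzero => ?_⟩
  · simp [walkCoeff_eq_zero_of_not_mem ε hw₁ he, walkCoeff_eq_zero_of_not_mem ε hp he,
      walkCoeff_eq_zero_of_not_mem ε hw₂ he]
  · simp only [map_sub, map_smul, kirchhoffDefect_walkCoeff ε hw₁, kirchhoffDefect_walkCoeff ε hp,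
      kirchhoffDefect_walkCoeff ε hw₂, hsign₁, hsign₂, Units.val_neg, Units.val_one]
    module
  · obtain ⟨e, he⟩ : ∃ e, ¬(e ∈ Set.range c₁.edge ↔ e ∈ Set.range c₂.edge) := by
      simpa [Set.ext_iff] using hdistinct
    have hparity := congrArg (fun g : G.E → ℤ => (g e : ZMod 2)) hzero
    simp only [Pi.sub_apply, Pi.smul_apply, smul_eq_mul, Int.cast_sub, Int.cast_mul,
      walkCoeff_cast_zmod_two, Cycle.count_walk, Int.units_cast_zmod_two,
      show ((2 : ℤ) : ZMod 2) = 0 from rfl] at hparity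
    by_cases he₁ : e ∈ Set.range c₁.edge <;> by_cases he₂ : e ∈ Set.range c₂.edge <;>
      simp [he₁, he₂] at he hparity

end Signs

variable {lam : ℝ}

open Classical in
def lamMult (lam : ℝ) (e : G.E) : ℕ := if h : e ∈ G.lamEdges lam then h.choose else 0

def lamSign (lam : ℝ) (e : G.E) : ℤˣ := (-1) ^ lamMult lam e

theorem length_eq_lamMult {e : G.E} (he : e ∈ G.lamEdges lam) :
    G.L e = lamMult lam e * (π / √lam) := by
  rw [lamMult, dif_pos he]
  exact he.choose_spec.2

theorem sqrt_mul_length {e : G.E} (hlam : 0 < lam) (he : e ∈ G.lamEdges lam) :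
    √lam * G.L e = lamMult lam e * π := by
  rw [length_eq_lamMult he]
  field_simp

theorem walkSign_lamSign_walk (hlam : 0 < lam) {c : G.Cycle} (hc : c.inSub (G.lamEdges lam))
    (hodd : c.oddLength (π / √lam)) : walkSign (lamSign lam) c.walk = -1 := by
  obtain ⟨m, hm, hlen⟩ := hodd
  have hsum : ∑ i, lamMult lam (c.edge i) = m := by
    have hpos : 0 < π / √lam := by positivity
    have : ((∑ i, lamMult lam (c.edge i) : ℕ) : ℝ) * (π / √lam) = m * (π / √lam) := by
      rw [← hlen, Cycle.length, Nat.cast_sum, Finset.sum_mul]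
      exact Finset.sum_congr rfl fun i _ => (length_eq_lamMult (hc i)).symm
    exact_mod_cast mul_right_cancel₀ hpos.ne' this
  simp only [Cycle.walkSign_walk, lamSign, Finset.prod_pow_eq_pow_sum, hsum, hm.neg_one_pow]

theorem csin_sqrt_mul_length {e : G.E} (hlam : 0 < lam) (he : e ∈ G.lamEdges lam) :
    Complex.sin (√lam * G.L e) = 0 := by
  rw [← Complex.ofReal_mul, sqrt_mul_length hlam he, ← Complex.ofReal_sin, Real.sin_nat_mul_pi,
    Complex.ofReal_zero]

theorem ccos_sqrt_mul_length {e : G.E} (hlam : 0 < lam) (he : e ∈ G.lamEdges lam) :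
    Complex.cos (√lam * G.L e) = (lamSign lam e : ℤ) := by
  rw [← Complex.ofReal_mul, sqrt_mul_length hlam he, ← Complex.ofReal_cos, Real.cos_nat_mul_pi]
  simp [lamSign]

def sineFun (lam : ℝ) (g : G.E → ℤ) : G.E → ℝ → ℂ := fun e x => g e * Complex.sin (√lam * x)

theorem sineFun_apply_zero (g : G.E → ℤ) (e : G.E) : sineFun lam g e 0 = 0 := by
  simp [sineFun]

theorem sineFun_apply_length (hlam : 0 < lam) {g : G.E → ℤ}
    (hsupp : ∀ e ∉ G.lamEdges lam, g e = 0) (e : G.E) : sineFun lam g e (G.L e) = 0 := by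
  by_cases he : e ∈ G.lamEdges lam
  · simp [sineFun, csin_sqrt_mul_length hlam he]
  · simp [sineFun, hsupp e he]

theorem deriv_sineFun (g : G.E → ℤ) (e : G.E) :
    deriv (sineFun lam g e) = fun x : ℝ => g e * (√lam * Complex.cos (√lam * x)) :=
  funext fun x => ((hasDerivAt_csin_ofReal_mul √lam x).const_mul _).deriv

theorem deriv_deriv_sineFun (hlam : 0 ≤ lam) (g : G.E → ℤ) (e : G.E) (x : ℝ) :
    deriv (deriv (sineFun lam g e)) x = -lam * sineFun lam g e x := by
  have hsq : (√lam : ℂ) * √lam = lam := by rw [← Complex.ofReal_mul, Real.mul_self_sqrt hlam]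
  rw [deriv_sineFun, ((hasDerivAt_ccos_ofReal_mul √lam x).const_mul _ |>.const_mul _).deriv]
  unfold sineFun
  linear_combination (-(g e : ℂ) * Complex.sin (√lam * x)) * hsq

theorem normDer_sineFun (hlam : 0 < lam) {g : G.E → ℤ} (hsupp : ∀ e ∉ G.lamEdges lam, g e = 0)
    (v : G.V) : G.normDer (sineFun lam g) v = √lam * kirchhoffDefect (lamSign lam) g v := by
  have hlength (e : G.E) :
      deriv (sineFun lam g e) (G.L e) = √lam * ((lamSign lam e : ℤ) * g e : ℤ) := by
    by_cases he : e ∈ G.lamEdges lam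
    · simp only [deriv_sineFun, ccos_sqrt_mul_length hlam he]
      push_cast
      ring
    · simp [deriv_sineFun, hsupp e he]
  simp only [normDer, kirchhoffDefect, hlength, deriv_sineFun, Complex.ofReal_zero, mul_zero,
    Complex.cos_zero, mul_one, LinearMap.coe_mk, AddHom.coe_mk, Int.cast_sub, Int.cast_sum,
    mul_sub, Finset.mul_sum]
  congr 1
  exact Finset.sum_congr rfl fun e _ => mul_comm _ _

theorem sineFun_mem_resSet (hlam : 0 < lam) {g : G.E → ℤ}
    (hsupp : ∀ e ∉ G.lamEdges lam, g e = 0) (hdefect : kirchhoffDefect (lamSign lam) g = 0) :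
    sineFun lam g ∈ G.resSet lam := by
  have hzero := sineFun_apply_zero (lam := lam) g
  have hlength := sineFun_apply_length hlam hsupp
  refine ⟨⟨⟨fun e => ?_, fun e => deriv_deriv_sineFun hlam.le g e, ?_, ?_, ?_⟩, fun v => ?_⟩,
    fun e => ⟨hzero e, hlength e⟩⟩
  · exact contDiff_const.mul ((Complex.contDiff_sin.restrict_scalars ℝ).comp
      (contDiff_const.mul Complex.ofRealCLM.contDiff))
  · intro e₁ e₂ _; rw [hzero, hzero]
  · intro e₁ e₂ _; rw [hzero, hlength]
  · intro e₁ e₂ _; rw [hlength, hlength]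
  · rw [normDer_sineFun hlam hsupp, hdefect, Pi.zero_apply, Int.cast_zero, mul_zero]

theorem sineFun_ne_zero (hlam : 0 < lam) {g : G.E → ℤ} (hg : g ≠ 0) : sineFun lam g ≠ 0 := by
  obtain ⟨e, he⟩ := Function.ne_iff.mp hg
  have hquarter : √lam * (π / (2 * √lam)) = π / 2 := by
    have := Real.sqrt_pos.mpr hlam
    field_simp
  intro h
  have hval := congrFun (congrFun h e) (π / (2 * √lam))
  rw [sineFun, ← Complex.ofReal_mul, hquarter, ← Complex.ofReal_sin, Real.sin_pi_div_two] at hval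
  simp only [Pi.zero_apply, Complex.ofReal_one, mul_one, Int.cast_eq_zero] at hval
  exact he hval

end MetricGraph

open MetricGraph in
/-- if some connected component of `G_λ` contains two cycles with
distinct edge sets, each of odd length with respect to `π/√λ`, then `λ` is a resonance
of `G`. -/
theorem statement_7 (G : MetricGraph) (lam : ℝ) (hlam : 0 < lam)
    (c₁ c₂ : G.Cycle)
    (h₁ : c₁.inSub (G.lamEdges lam)) (h₂ : c₂.inSub (G.lamEdges lam))
    (hodd₁ : c₁.oddLength (π / Real.sqrt lam)) (hodd₂ : c₂.oddLength (π / Real.sqrt lam))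
    (hdistinct : Set.range c₁.edge ≠ Set.range c₂.edge)
    (hsame : G.connRel (G.lamEdges lam) c₁.start c₂.start) :
    G.IsResonance lam := by
  obtain ⟨g, hsupp, hdefect, hg⟩ := exists_ne_zero_kirchhoffDefect_eq_zero (lamSign lam) c₁ c₂
    h₁ h₂ (walkSign_lamSign_walk hlam h₁ hodd₁) (walkSign_lamSign_walk hlam h₂ hodd₂)
    hdistinct hsame
  intro hres
  have hmem := sineFun_mem_resSet hlam hsupp hdefect
  rw [hres] at hmem
  exact sineFun_ne_zero hlam hg hmem
end
end
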